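/- Let g be a strictly increasing convex distortion function and set α_{n−1} = g((n−1)/n). Then for every α with α_{n−1} < α < 1, the dual norm of the scaled generalized-ES norm ⟨⟨·⟩⟩_α^{S,g} is the L₁-norm: for all x ∈ ℝⁿ, ⟨⟨x⟩⟩_α^{S,g,*} = ‖x‖₁ = Σ_{i=1}^n |x_i|. -/

import Mathlib

open Finset

/-- The absolute values of the components of `x`, arranged in increasing order:
`absSorted x i` is `|x|_(i+1)` in the paper's notation. -/
noncomputable def absSorted {n : ℕ} (x : Fin n → ℝ) : Fin n → ℝ :=
  fun i => |x (Tuple.sort (fun j => |x j|) i)|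

/-- `coeff n g i = g((i+1)/n) - g(i/n)`, the paper's `c_{i+1}`. -/
noncomputable def coeff (n : ℕ) (g : ℝ → ℝ) (i : Fin n) : ℝ :=
  g (((i : ℕ) + 1 : ℝ) / n) - g (((i : ℕ) : ℝ) / n)

/-- The objective function whose infimum over `t` defines the scaled generalized-ES norm. -/
noncomputable def sgesObj {n : ℕ} (g : ℝ → ℝ) (α : ℝ) (x : Fin n → ℝ) (t : ℝ) : ℝ :=
  t + (1 - α)⁻¹ * ∑ i, coeff n g i * max (absSorted x i - t) 0

/-- The scaled generalized-ES norm `⟨⟨x⟩⟩_α^{S,g}`. -/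
noncomputable def sges {n : ℕ} (g : ℝ → ℝ) (α : ℝ) (x : Fin n → ℝ) : ℝ :=
  ⨅ t : ℝ, sgesObj g α x t

/-- The non-scaled generalized-ES norm `⟨⟨x⟩⟩_α^{g} = n(1-α)⟨⟨x⟩⟩_α^{S,g}`. -/
noncomputable def nges {n : ℕ} (g : ℝ → ℝ) (α : ℝ) (x : Fin n → ℝ) : ℝ :=
  (n : ℝ) * (1 - α) * sges g α x

/-- The dual norm of a (norm) functional `N` on `ℝⁿ`. -/
noncomputable def dualNorm {n : ℕ} (N : (Fin n → ℝ) → ℝ) (y : Fin n → ℝ) : ℝ :=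
  sSup {r : ℝ | ∃ x : Fin n → ℝ, N x ≤ 1 ∧ r = ∑ i, x i * y i}

/-- The ordered weighted L1 (OWL) norm. -/
noncomputable def owl {n : ℕ} (w : Fin n → ℝ) (x : Fin n → ℝ) : ℝ :=
  ∑ i, w i * absSorted x i

/-
Once `g((n-1)/n) ≤ α < 1`, the weight `c_n / (1 - α)` of the largest entry `|x|_(n)` in the
objective is at least `1`, so every `t` gives an objective value `≥ |x|_(n)`, with equality at
`t = |x|_(n)`. Hence the scaled generalized-ES norm is the maximum norm, whose dual is `‖·‖₁`.
-/

lemma monotone_absSorted {n : ℕ} (x : Fin n → ℝ) : Monotone (absSorted x) :=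
  Tuple.monotone_sort (fun j => |x j|)

lemma absSorted_le_last {n : ℕ} (x : Fin n → ℝ) (hn : 1 ≤ n) (i : Fin n) :
    absSorted x i ≤ absSorted x ⟨n - 1, by omega⟩ :=
  monotone_absSorted x (Fin.mk_le_mk.2 (by omega) : i ≤ ⟨n - 1, by omega⟩)

lemma abs_le_absSorted_last {n : ℕ} (x : Fin n → ℝ) (hn : 1 ≤ n) (i : Fin n) :
    |x i| ≤ absSorted x ⟨n - 1, by omega⟩ := by
  have h : |x i| = absSorted x ((Tuple.sort fun j => |x j|)⁻¹ i) := by simp [absSorted]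
  exact h ▸ absSorted_le_last x hn _

lemma absSorted_last_eq_norm {n : ℕ} (x : Fin n → ℝ) (hn : 1 ≤ n) :
    absSorted x ⟨n - 1, by omega⟩ = ‖x‖ :=
  le_antisymm (norm_le_pi_norm x _)
    ((pi_norm_le_iff_of_nonneg (abs_nonneg _)).2 fun i => abs_le_absSorted_last x hn i)

lemma coeff_nonneg {n : ℕ} {g : ℝ → ℝ} (hg : MonotoneOn g (Set.Icc 0 1)) (i : Fin n) :
    0 ≤ coeff n g i := by
  have hn : (0 : ℝ) < n := by exact_mod_cast i.pos
  have hi : ((i : ℕ) : ℝ) + 1 ≤ n := by exact_mod_cast i.isLt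
  have mem_Icc : ∀ k : ℝ, 0 ≤ k → k ≤ n → k / n ∈ Set.Icc (0 : ℝ) 1 := fun k h0 h1 =>
    ⟨by positivity, (div_le_one hn).2 h1⟩
  refine sub_nonneg.2 (hg (mem_Icc _ (by positivity) (by linarith))
    (mem_Icc _ (by positivity) hi) ?_)
  gcongr
  linarith

lemma coeff_last {n : ℕ} (hn : 1 ≤ n) {g : ℝ → ℝ} (hg1 : g 1 = 1) :
    coeff n g ⟨n - 1, by omega⟩ = 1 - g (((n : ℝ) - 1) / n) := by
  have hn' : (n : ℝ) ≠ 0 := by positivity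
  simp only [coeff, Nat.cast_sub hn, Nat.cast_one, sub_add_cancel, div_self hn', hg1]

section Sges

variable {n : ℕ} {g : ℝ → ℝ} {α : ℝ} (x : Fin n → ℝ)

lemma absSorted_last_le_sgesObj (hn : 1 ≤ n) (hc : ∀ i, 0 ≤ coeff n g i) (hα : α < 1)
    (hlast : 1 - α ≤ coeff n g ⟨n - 1, by omega⟩) (t : ℝ) :
    absSorted x ⟨n - 1, by omega⟩ ≤ sgesObj g α x t := by
  set M := absSorted x ⟨n - 1, by omega⟩
  have hα' : 0 < 1 - α := by linarith
  have hterm : ∀ i, 0 ≤ coeff n g i * max (absSorted x i - t) 0 := fun i =>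
    mul_nonneg (hc i) (le_max_right _ _)
  have hsum : (1 - α) * max (M - t) 0 ≤ ∑ i, coeff n g i * max (absSorted x i - t) 0 :=
    (mul_le_mul_of_nonneg_right hlast (le_max_right _ _)).trans
      (Finset.single_le_sum (fun i _ => hterm i) (Finset.mem_univ _))
  have key : max (M - t) 0 ≤ (1 - α)⁻¹ * ∑ i, coeff n g i * max (absSorted x i - t) 0 := by
    rwa [le_inv_mul_iff₀ hα']
  unfold sgesObj
  linarith [le_max_left (M - t) 0]

lemma sgesObj_absSorted_last (hn : 1 ≤ n) :
    sgesObj g α x (absSorted x ⟨n - 1, by omega⟩) = absSorted x ⟨n - 1, by omega⟩ := by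
  have hzero : ∀ i, max (absSorted x i - absSorted x ⟨n - 1, by omega⟩) 0 = 0 := fun i =>
    max_eq_right (sub_nonpos.2 (absSorted_le_last x hn i))
  simp [sgesObj, hzero]

lemma sges_eq_norm (hn : 1 ≤ n) (hg : MonotoneOn g (Set.Icc 0 1)) (hg1 : g 1 = 1)
    (hα1 : g (((n : ℝ) - 1) / n) ≤ α) (hα2 : α < 1) : sges g α x = ‖x‖ := by
  have hlast : 1 - α ≤ coeff n g ⟨n - 1, by omega⟩ := by rw [coeff_last hn hg1]; linarith
  have hlb := absSorted_last_le_sgesObj x hn (coeff_nonneg hg) hα2 hlast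
  rw [← absSorted_last_eq_norm x hn]
  refine le_antisymm ?_ (le_ciInf hlb)
  calc sges g α x ≤ sgesObj g α x (absSorted x ⟨n - 1, by omega⟩) :=
        ciInf_le ⟨_, Set.forall_mem_range.2 hlb⟩ _
    _ = absSorted x ⟨n - 1, by omega⟩ := sgesObj_absSorted_last x hn

end Sges

lemma dualNorm_norm {n : ℕ} (y : Fin n → ℝ) : dualNorm (‖·‖) y = ∑ i, |y i| := by
  set S := {r : ℝ | ∃ x : Fin n → ℝ, ‖x‖ ≤ 1 ∧ r = ∑ i, x i * y i}
  have hmem : ∑ i, |y i| ∈ S := by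
    refine ⟨fun i => SignType.sign (y i), ?_, by simp [sign_mul_self]⟩
    refine (pi_norm_le_iff_of_nonneg zero_le_one).2 fun i => ?_
    rcases SignType.sign (y i) with _ | _ | _ <;> simp
  have hub : ∀ r ∈ S, r ≤ ∑ i, |y i| := by
    rintro _ ⟨x, hx, rfl⟩
    refine Finset.sum_le_sum fun i _ => ?_
    calc x i * y i ≤ |x i| * |y i| := (le_abs_self _).trans (abs_mul _ _).le
      _ ≤ 1 * |y i| := by gcongr; exact (norm_le_pi_norm x i).trans hx
      _ = |y i| := one_mul _
  exact le_antisymm (csSup_le ⟨_, hmem⟩ hub) (le_csSup ⟨_, hub⟩ hmem)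

theorem stmt18_general (n : ℕ) (hn : 1 ≤ n) (g : ℝ → ℝ)
    (hg_mono : StrictMonoOn g (Set.Icc 0 1))
    (hg1 : g 1 = 1)
    (α : ℝ) (hα1 : g (((n : ℝ) - 1) / n) < α) (hα2 : α < 1) (x : Fin n → ℝ) :
    dualNorm (sges g α) x = ∑ i, |x i| := by
  have hsges : sges g α = (‖·‖) :=
    funext fun y => sges_eq_norm y hn hg_mono.monotoneOn hg1 hα1.le hα2
  rw [hsges, dualNorm_norm]

/-- for a strictly increasing convex distortion function and
`g((n-1)/n) < α < 1`, the dual norm of the scaled generalized-ES norm is the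
L1-norm. -/
theorem stmt18 (n : ℕ) (hn : 1 ≤ n) (g : ℝ → ℝ)
    (hg_mono : StrictMonoOn g (Set.Icc 0 1)) (hg_conv : ConvexOn ℝ (Set.Icc 0 1) g)
    (hg0 : g 0 = 0) (hg1 : g 1 = 1)
    (α : ℝ) (hα1 : g (((n : ℝ) - 1) / n) < α) (hα2 : α < 1) (x : Fin n → ℝ) :
    dualNorm (sges g α) x = ∑ i, |x i| :=
  stmt18_general n hn g hg_mono hg1 α hα1 hα2 x
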